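/- arXiv:1811.03404 — 2 statements merged into one kernel-verified Lean document; each statement's English description precedes it below -/
import Mathlib

section
/- The kernel k(x,y) = 1/|x−y| is asymptotically smooth on ℝ³ × ℝ³: for all multi-indices α, β ∈ ℕ³ with α + β ≠ 0 and all x ≠ y, |D_x^α D_y^β k(x,y)| ≤ C (α+β)! |α+β|^r γ^{|α+β|} |x−y|^{−|α|−|β|−1} for some constants C, r, γ > 0 independent of x, y, α, β. -/
open Real

noncomputable def pderiv3 (i : Fin 3) (f : EuclideanSpace ℝ (Fin 3) → ℝ) :
    EuclideanSpace ℝ (Fin 3) → ℝ :=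
  fun x => deriv (fun t : ℝ => f (x + t • EuclideanSpace.single i (1 : ℝ))) 0

/-- Mixed partial derivative `D^α` for a multi-index `α : Fin 3 → ℕ`. -/
noncomputable def multiPDeriv (α : Fin 3 → ℕ) (f : EuclideanSpace ℝ (Fin 3) → ℝ) :
    EuclideanSpace ℝ (Fin 3) → ℝ :=
  ((pderiv3 0)^[α 0] ∘ (pderiv3 1)^[α 1] ∘ (pderiv3 2)^[α 2]) f

/-- order of a multi-index -/
def mAbs (α : Fin 3 → ℕ) : ℕ := α 0 + α 1 + α 2

/-- factorial of a multi-index -/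
def mFact (α : Fin 3 → ℕ) : ℕ := (α 0).factorial * (α 1).factorial * (α 2).factorial

/-!
Off the origin, a derivative of order `n` of `z ↦ ‖z‖⁻¹` is a finite sum of terms
`c z^μ / ‖z‖^(|μ| + n + 1)` with `|μ| ≤ n`. A partial derivative `∂ᵢ` turns one such term into
`c μᵢ z^(μ - eᵢ) / ‖z‖^(|μ| + n + 1) - c (|μ| + n + 1) z^(μ + eᵢ) / ‖z‖^(|μ| + n + 3)`,
two terms of the same shape for `n + 1`, so the ℓ¹-norm of the coefficients grows by a factor at
most `3 (n + 1)` per derivative and stays below `3^n n!`. Since `|z^μ| ≤ ‖z‖^|μ|`, each derivative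
of order `n` is bounded by `3^n n! / ‖z‖^(n + 1)`. The kernel `‖x - y‖⁻¹` reduces to this by
translation and reflection, and the multinomial bound `n! ≤ 3^n α!` gives the claim with
`C = r = 1` and `γ = 9`.
-/

open Finset
open scoped Nat

namespace CoulombKernel

section Monomial

variable {ι : Type*} [Fintype ι]

def monomial (μ : ι → ℕ) (x : EuclideanSpace ℝ ι) : ℝ := ∏ j, x j ^ μ j

lemma abs_monomial_le (μ : ι → ℕ) (x : EuclideanSpace ℝ ι) :
    |monomial μ x| ≤ ‖x‖ ^ ∑ j, μ j := by
  rw [monomial, abs_prod, ← prod_pow_eq_pow_sum]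
  gcongr with j
  rw [abs_pow, ← Real.norm_eq_abs]
  exact pow_le_pow_left₀ (norm_nonneg _) (PiLp.norm_apply_le x j) _

variable [DecidableEq ι]

lemma monomial_add_single (μ : ι → ℕ) (i : ι) (x : EuclideanSpace ℝ ι) :
    monomial (μ + Pi.single i 1) x = monomial μ x * x i := by
  simp only [monomial, Pi.add_apply, pow_add, prod_mul_distrib]
  congr 1
  rw [Fintype.prod_eq_single i fun j hj => by simp [hj]]
  simp

lemma sum_add_single (μ : ι → ℕ) (i : ι) : ∑ j, (μ + Pi.single i 1 : ι → ℕ) j = ∑ j, μ j + 1 := by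
  simp [sum_add_distrib]

lemma sum_sub_single_add_one {μ : ι → ℕ} {i : ι} (hi : μ i ≠ 0) :
    ∑ j, (μ - Pi.single i 1 : ι → ℕ) j + 1 = ∑ j, μ j := by
  have hle : Pi.single i 1 ≤ μ := by
    intro j
    rcases eq_or_ne j i with rfl | hj
    · simpa [Nat.one_le_iff_ne_zero] using hi
    · simp [hj]
  rw [← sum_add_single, tsub_add_cancel_of_le hle]

lemma hasDerivAt_monomial_add_smul_single (μ : ι → ℕ) (x : EuclideanSpace ℝ ι) (i : ι) :
    HasDerivAt (fun t : ℝ => monomial μ (x + t • EuclideanSpace.single i 1))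
      (μ i * monomial (μ - Pi.single i 1) x) 0 := by
  set P := ∏ j ∈ univ.erase i, x j ^ μ j
  have hline : ∀ t : ℝ, monomial μ (x + t • EuclideanSpace.single i 1) = (x i + t) ^ μ i * P := by
    intro t
    rw [monomial, ← mul_prod_erase _ _ (mem_univ i)]
    congr 1
    · simp
    · refine prod_congr rfl fun j hj => ?_
      simp [ne_of_mem_erase hj]
  have hlower : monomial (μ - Pi.single i 1) x = x i ^ (μ i - 1) * P := by
    rw [monomial, ← mul_prod_erase _ _ (mem_univ i)]
    congr 1
    · simp
    · refine prod_congr rfl fun j hj => ?_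
      simp [ne_of_mem_erase hj]
  simp_rw [hline, hlower]
  simpa [mul_assoc] using (((hasDerivAt_id (0 : ℝ)).const_add (x i)).fun_pow (μ i)).mul_const P

end Monomial

lemma hasDerivAt_norm_add_smul {E : Type*} [NormedAddCommGroup E] [InnerProductSpace ℝ E]
    {x : E} (hx : x ≠ 0) (v : E) :
    HasDerivAt (fun t : ℝ => ‖x + t • v‖) (inner ℝ x v / ‖x‖) 0 := by
  have hline : HasDerivAt (fun t : ℝ => x + t • v) v 0 := by
    simpa using ((hasDerivAt_id (0 : ℝ)).smul_const v).const_add x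
  convert (hline.norm_sq.sqrt (by simpa using hx)) using 1
  · simp [Real.sqrt_sq (norm_nonneg _)]
  · simp [Real.sqrt_sq (norm_nonneg _)]
    ring

lemma hasDerivAt_inv_norm_pow_add_smul {E : Type*} [NormedAddCommGroup E]
    [InnerProductSpace ℝ E] {x : E} (hx : x ≠ 0) (v : E) (k : ℕ) :
    HasDerivAt (fun t : ℝ => (‖x + t • v‖ ^ k)⁻¹) (-(k * inner ℝ x v) / ‖x‖ ^ (k + 2)) 0 := by
  have hx' : ‖x‖ ≠ 0 := norm_ne_zero_iff.2 hx
  refine (((hasDerivAt_norm_add_smul hx v).fun_pow k).fun_inv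
    (by simpa using pow_ne_zero k hx')).congr_deriv ?_
  rcases k with _ | k
  · simp
  · simp only [zero_smul, add_zero, Nat.add_sub_cancel]
    field_simp
    ring

section Expansion

variable {ι : Type*} [Fintype ι]

noncomputable def expansionTerm (n : ℕ) (c : ℝ) (μ : ι → ℕ) (x : EuclideanSpace ℝ ι) : ℝ :=
  c * monomial μ x / ‖x‖ ^ (∑ j, μ j + n + 1)

lemma abs_expansionTerm_le (n : ℕ) (c : ℝ) (μ : ι → ℕ) {x : EuclideanSpace ℝ ι} (hx : x ≠ 0) :
    |expansionTerm n c μ x| ≤ |c| / ‖x‖ ^ (n + 1) := by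
  have hx' : 0 < ‖x‖ := norm_pos_iff.2 hx
  rw [expansionTerm, abs_div, abs_mul, abs_of_pos (pow_pos hx' _), add_assoc, pow_add]
  calc |c| * |monomial μ x| / (‖x‖ ^ (∑ j, μ j : ℕ) * ‖x‖ ^ (n + 1))
      ≤ |c| * ‖x‖ ^ (∑ j, μ j : ℕ) / (‖x‖ ^ (∑ j, μ j : ℕ) * ‖x‖ ^ (n + 1)) := by
        gcongr
        exact abs_monomial_le μ x
    _ = |c| / ‖x‖ ^ (n + 1) := by field_simp

lemma hasDerivAt_expansionTerm_add_smul_single [DecidableEq ι] (n : ℕ) (c : ℝ) (μ : ι → ℕ)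
    {x : EuclideanSpace ℝ ι} (hx : x ≠ 0) (i : ι) :
    HasDerivAt (fun t : ℝ => expansionTerm n c μ (x + t • EuclideanSpace.single i 1))
      (expansionTerm (n + 1) (c * μ i) (μ - Pi.single i 1) x +
        expansionTerm (n + 1) (-(c * (∑ j, μ j + n + 1 : ℕ))) (μ + Pi.single i 1) x) 0 := by
  have h := ((hasDerivAt_monomial_add_smul_single μ x i).const_mul c).mul
    (hasDerivAt_inv_norm_pow_add_smul hx (EuclideanSpace.single i 1) (∑ j, μ j + n + 1))
  simp only [zero_smul, add_zero, EuclideanSpace.inner_single_right, one_mul, conj_trivial] at h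
  refine h.congr_deriv ?_
  -- `μ - Pi.single i 1` truncates when `μ i = 0`; then its degree is off, but its coefficient is 0.
  have hlower : (μ i : ℝ) / ‖x‖ ^ (∑ j, μ j + n + 1) =
      μ i / ‖x‖ ^ (∑ j, (μ - Pi.single i 1 : ι → ℕ) j + (n + 1) + 1) := by
    rcases eq_or_ne (μ i) 0 with hi | hi
    · simp [hi]
    · rw [← sum_sub_single_add_one hi]
      ring_nf
  simp only [expansionTerm, sum_add_single, monomial_add_single, div_eq_mul_inv] at hlower ⊢
  rw [show ∑ j, μ j + 1 + (n + 1) + 1 = ∑ j, μ j + n + 1 + 2 by ring]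
  linear_combination c * monomial (μ - Pi.single i 1) x * hlower

lemma sum_abs_coeff_lineDeriv_le {κ : Type*} [Fintype κ] {n : ℕ} (c : κ → ℝ) (μ : κ → ι → ℕ)
    (i : ι) (hμ : ∀ a, ∑ j, μ a j ≤ n) (hc : ∑ a, |c a| ≤ 3 ^ n * n !) :
    ∑ a, |c a * μ a i| + ∑ a, |-(c a * (∑ j, μ a j + n + 1 : ℕ))| ≤ 3 ^ (n + 1) * (n + 1)! := by
  have hμi : ∀ a, (μ a i : ℝ) ≤ n := fun a => by
    exact_mod_cast (single_le_sum (fun j _ => Nat.zero_le (μ a j)) (mem_univ i)).trans (hμ a)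
  have hμs : ∀ a, ((∑ j, μ a j : ℕ) : ℝ) ≤ n := fun a => by exact_mod_cast hμ a
  calc ∑ a, |c a * μ a i| + ∑ a, |-(c a * (∑ j, μ a j + n + 1 : ℕ))|
      = ∑ a, |c a| * (μ a i + ((∑ j, μ a j : ℕ) + n + 1)) := by
        rw [← sum_add_distrib]
        refine sum_congr rfl fun a _ => ?_
        simp only [abs_mul, abs_neg, Nat.abs_cast]
        push_cast
        ring
    _ ≤ (∑ a, |c a|) * (3 * (n + 1)) := by
        rw [sum_mul]
        gcongr with a
        linarith [hμi a, hμs a]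
    _ ≤ 3 ^ n * n ! * (3 * (n + 1)) := by gcongr
    _ = 3 ^ (n + 1) * (n + 1)! := by
        rw [Nat.factorial_succ]
        push_cast
        ring

def HasHomogeneousExpansion (n : ℕ) (F : EuclideanSpace ℝ ι → ℝ) : Prop :=
  ∃ (κ : Type) (_ : Fintype κ) (c : κ → ℝ) (μ : κ → ι → ℕ),
    (∀ a, ∑ j, μ a j ≤ n) ∧ ∑ a, |c a| ≤ 3 ^ n * n ! ∧
      ∀ x, x ≠ 0 → F x = ∑ a, expansionTerm n (c a) (μ a) x

lemma hasHomogeneousExpansion_inv_norm :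
    HasHomogeneousExpansion 0 fun x : EuclideanSpace ℝ ι => ‖x‖⁻¹ :=
  ⟨Unit, inferInstance, fun _ => 1, fun _ => 0, by simp, by simp, by simp [expansionTerm, monomial]⟩

namespace HasHomogeneousExpansion

variable {n : ℕ} {F : EuclideanSpace ℝ ι → ℝ}

lemma abs_le (h : HasHomogeneousExpansion n F) {x : EuclideanSpace ℝ ι} (hx : x ≠ 0) :
    |F x| ≤ 3 ^ n * n ! / ‖x‖ ^ (n + 1) := by
  obtain ⟨κ, _, c, μ, -, hc, hF⟩ := h
  rw [hF x hx]
  calc |∑ a, expansionTerm n (c a) (μ a) x| ≤ ∑ a, |c a| / ‖x‖ ^ (n + 1) :=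
        (abs_sum_le_sum_abs _ _).trans (sum_le_sum fun a _ => abs_expansionTerm_le n _ _ hx)
    _ ≤ 3 ^ n * n ! / ‖x‖ ^ (n + 1) := by
        rw [← sum_div]
        gcongr

lemma lineDeriv_single [DecidableEq ι] (h : HasHomogeneousExpansion n F) (i : ι) :
    HasHomogeneousExpansion (n + 1) fun x => lineDeriv ℝ F x (EuclideanSpace.single i 1) := by
  obtain ⟨κ, _, c, μ, hμ, hc, hF⟩ := h
  refine ⟨κ ⊕ κ, inferInstance,
    Sum.elim (fun a => c a * μ a i) (fun a => -(c a * (∑ j, μ a j + n + 1 : ℕ))),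
    Sum.elim (fun a => μ a - Pi.single i 1) (fun a => μ a + Pi.single i 1), ?_, ?_, ?_⟩
  · rintro (a | a)
    · exact (sum_le_sum fun j _ => tsub_le_self).trans (hμ a |>.trans n.le_succ)
    · show ∑ j, (μ a + Pi.single i 1 : ι → ℕ) j ≤ n + 1
      rw [sum_add_single]
      exact Nat.add_le_add_right (hμ a) 1
  · rw [Fintype.sum_sum_type]
    exact sum_abs_coeff_lineDeriv_le c μ i hμ hc
  · intro x hx
    have hnear : F =ᶠ[nhds x] fun y => ∑ a, expansionTerm n (c a) (μ a) y :=
      Filter.eventually_of_mem (isOpen_ne.mem_nhds hx) hF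
    have hderiv : HasLineDerivAt ℝ (fun y => ∑ a, expansionTerm n (c a) (μ a) y)
        (∑ a, (expansionTerm (n + 1) (c a * μ a i) (μ a - Pi.single i 1) x +
          expansionTerm (n + 1) (-(c a * (∑ j, μ a j + n + 1 : ℕ))) (μ a + Pi.single i 1) x))
        x (EuclideanSpace.single i 1) :=
      HasDerivAt.fun_sum fun a _ => hasDerivAt_expansionTerm_add_smul_single n _ _ hx i
    beta_reduce
    rw [(hderiv.congr_of_eventuallyEq hnear).lineDeriv, Fintype.sum_sum_type, sum_add_distrib]
    rfl

end HasHomogeneousExpansion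

end Expansion

lemma multinomial_le_card_pow {ι : Type*} [Fintype ι] [DecidableEq ι] (f : ι → ℕ) :
    Nat.multinomial univ f ≤ Fintype.card ι ^ ∑ i, f i := by
  have h := sum_pow_eq_sum_piAntidiag (univ : Finset ι) (fun _ => (1 : ℕ)) (∑ i, f i)
  simp only [sum_const, card_univ, smul_eq_mul, mul_one, one_pow, prod_const_one] at h
  rw [h]
  exact single_le_sum (fun _ _ => Nat.zero_le _) (mem_piAntidiag.2 ⟨rfl, fun i _ => mem_univ i⟩)

lemma factorial_sum_le {ι : Type*} [Fintype ι] [DecidableEq ι] (f : ι → ℕ) :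
    (∑ i, f i)! ≤ Fintype.card ι ^ (∑ i, f i) * ∏ i, (f i)! := by
  rw [← Nat.multinomial_spec, mul_comm]
  exact Nat.mul_le_mul_right _ (multinomial_le_card_pow f)

local notation "E3" => EuclideanSpace ℝ (Fin 3)

theorem HasHomogeneousExpansion.iterate_pderiv3 {n : ℕ} {F : E3 → ℝ}
    (h : HasHomogeneousExpansion n F) (i : Fin 3) (m : ℕ) :
    HasHomogeneousExpansion (n + m) ((pderiv3 i)^[m] F) := by
  induction m with
  | zero => exact h
  | succ m ih =>
    rw [Function.iterate_succ_apply']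
    exact ih.lineDeriv_single i

theorem HasHomogeneousExpansion.multiPDeriv {n : ℕ} {F : E3 → ℝ}
    (h : HasHomogeneousExpansion n F) (α : Fin 3 → ℕ) :
    HasHomogeneousExpansion (n + mAbs α) (multiPDeriv α F) := by
  have h' := ((h.iterate_pderiv3 2 (α 2)).iterate_pderiv3 1 (α 1)).iterate_pderiv3 0 (α 0)
  rwa [show n + α 2 + α 1 + α 0 = n + mAbs α by simp only [mAbs]; ring] at h'

lemma pderiv3_const_mul_comp_smul_add (i : Fin 3) (a s : ℝ) (c : E3) (f : E3 → ℝ) :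
    pderiv3 i (fun z => a * f (s • z + c)) = fun z => a * s * pderiv3 i f (s • z + c) := by
  funext z
  have hline : (fun t : ℝ => f (s • (z + t • EuclideanSpace.single i 1) + c)) =
      fun t => f (s • z + c + t • s • EuclideanSpace.single i 1) := by
    funext t
    congr 1
    module
  rw [pderiv3, deriv_const_mul_field, hline]
  change a * lineDeriv ℝ f (s • z + c) (s • EuclideanSpace.single i 1) = _
  rw [lineDeriv_smul, smul_eq_mul, mul_assoc]
  rfl

lemma iterate_pderiv3_const_mul_comp_smul_add (i : Fin 3) (m : ℕ) (a s : ℝ) (c : E3) (f : E3 → ℝ) :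
    (pderiv3 i)^[m] (fun z => a * f (s • z + c)) =
      fun z => a * s ^ m * ((pderiv3 i)^[m] f) (s • z + c) := by
  induction m generalizing a f with
  | zero => simp
  | succ m ih =>
    rw [Function.iterate_succ_apply, pderiv3_const_mul_comp_smul_add, ih, Function.iterate_succ_apply]
    funext z
    ring

lemma multiPDeriv_const_mul_comp_smul_add (α : Fin 3 → ℕ) (a s : ℝ) (c : E3) (f : E3 → ℝ) :
    multiPDeriv α (fun z => a * f (s • z + c)) =
      fun z => a * s ^ mAbs α * multiPDeriv α f (s • z + c) := by
  simp only [multiPDeriv, Function.comp_apply, iterate_pderiv3_const_mul_comp_smul_add, mAbs, pow_add]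
  funext z
  ring

lemma multiPDeriv_multiPDeriv_comp_sub (α β : Fin 3 → ℕ) (f : E3 → ℝ) (x y : E3) :
    multiPDeriv α (fun x' => multiPDeriv β (fun y' => f (x' - y')) y) x =
      (-1) ^ mAbs β * multiPDeriv α (multiPDeriv β f) (x - y) := by
  have hinner : ∀ x', multiPDeriv β (fun y' => f (x' - y')) y =
      (-1) ^ mAbs β * multiPDeriv β f ((1 : ℝ) • x' + -y) := by
    intro x'
    have hf : (fun y' => f (x' - y')) = fun y' => 1 * f ((-1 : ℝ) • y' + x') := by
      funext y'
      simp [sub_eq_neg_add]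
    rw [hf, multiPDeriv_const_mul_comp_smul_add]
    beta_reduce
    rw [neg_one_smul, one_smul, one_mul, neg_add_eq_sub, ← sub_eq_add_neg]
  simp_rw [hinner, multiPDeriv_const_mul_comp_smul_add]
  simp [sub_eq_add_neg]

lemma factorial_mAbs_le (σ : Fin 3 → ℕ) : (mAbs σ)! ≤ 3 ^ mAbs σ * mFact σ := by
  simpa [mAbs, mFact, Fin.sum_univ_three, Fin.prod_univ_three, mul_assoc] using factorial_sum_le σ

lemma mAbs_pos {σ : Fin 3 → ℕ} (hσ : σ ≠ 0) : 0 < mAbs σ := by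
  refine Nat.pos_of_ne_zero fun h => hσ (funext fun i => ?_)
  fin_cases i <;> simp only [mAbs] at h <;> simp <;> omega

end CoulombKernel

open CoulombKernel in
theorem coulomb_kernel_asymptotically_smooth :
    ∃ C r γ : ℝ, 0 < C ∧ 0 < r ∧ 0 < γ ∧
      ∀ (α β : Fin 3 → ℕ), α + β ≠ 0 →
        ∀ x y : EuclideanSpace ℝ (Fin 3), x ≠ y →
          |multiPDeriv α
              (fun x' => multiPDeriv β (fun y' => ‖x' - y'‖⁻¹) y) x|
            ≤ C * (mFact (α + β) : ℝ) * (mAbs (α + β) : ℝ) ^ r *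
                γ ^ (mAbs (α + β)) *
                ‖x - y‖ ^ (-(mAbs α : ℝ) - (mAbs β : ℝ) - 1) := by
  refine ⟨1, 1, 9, one_pos, one_pos, by norm_num, fun α β hαβ x y hxy => ?_⟩
  set n := mAbs (α + β)
  have hn : mAbs β + mAbs α = n := by simp only [n, mAbs, Pi.add_apply]; ring
  have hxy' : x - y ≠ 0 := sub_ne_zero.2 hxy
  have hexp : HasHomogeneousExpansion n (multiPDeriv α (multiPDeriv β fun z => ‖z‖⁻¹)) := by
    simpa [hn] using (hasHomogeneousExpansion_inv_norm.multiPDeriv β).multiPDeriv α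
  have hfact : (n ! : ℝ) ≤ 3 ^ n * mFact (α + β) := by exact_mod_cast factorial_mAbs_le (α + β)
  have hn1 : (1 : ℝ) ≤ n := by exact_mod_cast mAbs_pos hαβ
  rw [multiPDeriv_multiPDeriv_comp_sub α β fun z => ‖z‖⁻¹, abs_mul, abs_pow, abs_neg, abs_one,
    one_pow, one_mul, show -(mAbs α : ℝ) - mAbs β - 1 = -((n + 1 : ℕ) : ℝ) by rw [← hn]; push_cast; ring,
    Real.rpow_neg (norm_nonneg _), Real.rpow_natCast, Real.rpow_one, ← div_eq_mul_inv]
  calc _ ≤ 3 ^ n * n ! / ‖x - y‖ ^ (n + 1) := hexp.abs_le hxy'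
    _ ≤ 3 ^ n * (3 ^ n * mFact (α + β) * n) / ‖x - y‖ ^ (n + 1) := by
      gcongr
      exact hfact.trans (le_mul_of_one_le_right (by positivity) hn1)
    _ = _ := by rw [show (9 : ℝ) = 3 * 3 by norm_num, mul_pow]; ring
end

section
/- In a cluster tree in which every leaf has cardinality greater than n_min and every non-leaf node has at least two sons whose index sets form a disjoint partition of their parent, the number of leaves is at most #I / n_min and the total number of nodes is at most 2·#I/n_min − 1, where I is the root index set. -/
/-!
Each internal node is the disjoint union of its sons, so cardinalities add up along the tree and
`#I` is the sum of the leaf cardinalities, each of which exceeds `nmin`; hence `nmin · #leaves ≤ #I`.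
Since every internal node has at least two sons, a tree has at most `2 · #leaves - 1` nodes.
-/

/-- A rooted tree of clusters: each node carries an index set and a list of sons
(leaves have an empty list of sons). -/
inductive CTree (I : Type) where
  | mk (label : Finset I) (sons : List (CTree I)) : CTree I

namespace CTree

variable {I : Type}

def label : CTree I → Finset I
  | .mk s _ => s

def numNodes : CTree I → ℕ
  | .mk _ sons => 1 + (sons.attach.map (fun t => numNodes t.1)).sum
  decreasing_by have := List.sizeOf_lt_of_mem t.2; simp at this ⊢; omega

def numLeaves : CTree I → ℕ
  | .mk _ [] => 1
  | .mk _ (t :: ts) => ((t :: ts).attach.map (fun u => numLeaves u.1)).sum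
  decreasing_by have := List.sizeOf_lt_of_mem u.2; simp at this ⊢; omega

/-- Validity of a cluster tree: every leaf has more than `nmin` indices and
every non-leaf node is the disjoint union of its at least two sons. -/
inductive Valid [DecidableEq I] (nmin : ℕ) : CTree I → Prop
  | leaf (s : Finset I) (h : nmin < s.card) : Valid nmin (.mk s [])
  | node (s : Finset I) (sons : List (CTree I))
      (hlen : 2 ≤ sons.length)
      (hsons : ∀ t ∈ sons, Valid nmin t)
      (hdisj : sons.Pairwise fun a b => Disjoint a.label b.label)
      (hunion : (sons.map label).foldr (· ∪ ·) ∅ = s) :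
      Valid nmin (.mk s sons)

end CTree

namespace Finset

variable {α : Type} [DecidableEq α]

theorem disjoint_foldr_union_right {a : Finset α} {l : List (Finset α)} :
    Disjoint a (l.foldr (· ∪ ·) ∅) ↔ ∀ b ∈ l, Disjoint a b := by
  induction l with
  | nil => simp
  | cons b l ih => simp [disjoint_union_right, ih]

theorem card_foldr_union_of_pairwise_disjoint {l : List (Finset α)} (h : l.Pairwise Disjoint) :
    (l.foldr (· ∪ ·) ∅).card = (l.map card).sum := by
  induction l with
  | nil => simp
  | cons a l ih =>
    obtain ⟨ha, hl⟩ := List.pairwise_cons.1 h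
    rw [List.foldr_cons, card_union_of_disjoint (disjoint_foldr_union_right.2 ha), ih hl,
      List.map_cons, List.sum_cons]

end Finset

namespace CTree

variable {I : Type}

theorem numNodes_mk (s : Finset I) (sons : List (CTree I)) :
    (mk s sons).numNodes = 1 + (sons.map numNodes).sum := by
  rw [numNodes, List.attach_map_val]

theorem numLeaves_mk_of_ne_nil (s : Finset I) {sons : List (CTree I)} (h : sons ≠ []) :
    (mk s sons).numLeaves = (sons.map numLeaves).sum := by
  cases sons with
  | nil => exact absurd rfl h
  | cons t ts => rw [numLeaves, List.attach_map_val]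

variable [DecidableEq I] {nmin : ℕ}

theorem card_eq_sum_card_label {s : Finset I} {sons : List (CTree I)}
    (hdisj : sons.Pairwise fun a b => Disjoint a.label b.label)
    (hunion : (sons.map label).foldr (· ∪ ·) ∅ = s) :
    s.card = (sons.map fun t => t.label.card).sum := by
  rw [← hunion, Finset.card_foldr_union_of_pairwise_disjoint (List.pairwise_map.2 hdisj),
    List.map_map]
  rfl

theorem Valid.nmin_mul_numLeaves_le_card {T : CTree I} (hT : T.Valid nmin) :
    nmin * T.numLeaves ≤ T.label.card := by
  induction hT with
  | leaf s h =>
    rw [numLeaves, mul_one]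
    exact h.le
  | node s sons hlen _ hdisj hunion ih =>
    have hne : sons ≠ [] := List.ne_nil_of_length_pos (by omega)
    rw [numLeaves_mk_of_ne_nil s hne, ← List.sum_map_mul_left, label,
      card_eq_sum_card_label hdisj hunion]
    exact List.sum_le_sum ih

theorem Valid.numNodes_add_one_le_two_mul_numLeaves {T : CTree I} (hT : T.Valid nmin) :
    T.numNodes + 1 ≤ 2 * T.numLeaves := by
  induction hT with
  | leaf s _ => simp [numNodes, numLeaves]
  | node s sons hlen _ _ _ ih =>
    have hne : sons ≠ [] := List.ne_nil_of_length_pos (by omega)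
    have hsum : (sons.map fun t => t.numNodes + 1).sum ≤ (sons.map fun t => 2 * t.numLeaves).sum :=
      List.sum_le_sum ih
    rw [List.sum_map_add, List.sum_map_mul_left, List.map_const', List.sum_replicate,
      smul_eq_mul, mul_one] at hsum
    rw [numNodes_mk, numLeaves_mk_of_ne_nil s hne]
    omega

end CTree

theorem cluster_tree_size_bounds {I : Type} [DecidableEq I]
    (nmin : ℕ) (hnmin : 1 ≤ nmin) (T : CTree I) (hT : CTree.Valid nmin T) :
    (T.numLeaves : ℝ) ≤ (T.label.card : ℝ) / nmin ∧
      (T.numNodes : ℝ) ≤ 2 * (T.label.card : ℝ) / nmin - 1 := by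
  have hpos : (0 : ℝ) < nmin := by exact_mod_cast hnmin
  have hleaves : (T.numLeaves : ℝ) ≤ (T.label.card : ℝ) / nmin := by
    rw [le_div_iff₀ hpos, mul_comm]
    exact_mod_cast hT.nmin_mul_numLeaves_le_card
  have hnodes : (T.numNodes : ℝ) + 1 ≤ 2 * T.numLeaves := by
    exact_mod_cast hT.numNodes_add_one_le_two_mul_numLeaves
  refine ⟨hleaves, ?_⟩
  rw [mul_div_assoc]
  linarith
end
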